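/- In the polynomial ring ℚ[A,q], let F₂ := A⁴·(A⁴q⁸ + A²q⁶ + A²q⁴ + 1), F₃ := A⁶q⁴·(A²q⁴ + 1)·(A⁴q¹⁶ + A²q¹⁰ + A²q⁸ − q⁶ + q² + 1), and F₂* := A⁶q⁴·(A⁴q¹⁶ + A²q¹⁰ + A²q⁸ + 1) (so that q⁴·F₂* = A²·F₂ with A replaced by Aq²). Then F₃ = (1 + A²q⁴)·( F₂* − A⁶q⁶·(q⁴ − 1) ). In particular (1 + A²q⁴) divides F₃, and q²(q⁴−1) divides F₃/(1 + A²q⁴) − F₂*. -/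

import Mathlib

/- Work in the polynomial ring ℚ[A,q] in two commuting indeterminates A and q. -/

namespace Stmt10

open MvPolynomial

/-- The variable `A` in `ℚ[A,q]`. -/
noncomputable def A : MvPolynomial (Fin 2) ℚ := X 0

/-- The variable `q` in `ℚ[A,q]`. -/
noncomputable def q : MvPolynomial (Fin 2) ℚ := X 1

/-- The second F-factor of the differential expansion for the knot 9₄₆:
`F₂ := A⁴·(A⁴q⁸ + A²q⁶ + A²q⁴ + 1)`. -/
noncomputable def F₂ : MvPolynomial (Fin 2) ℚ :=
  A ^ 4 * (A ^ 4 * q ^ 8 + A ^ 2 * q ^ 6 + A ^ 2 * q ^ 4 + 1)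

/-- The third F-factor of the differential expansion for the knot 9₄₆:
`F₃ := A⁶q⁴·(A²q⁴ + 1)·(A⁴q¹⁶ + A²q¹⁰ + A²q⁸ − q⁶ + q² + 1)`. -/
noncomputable def F₃ : MvPolynomial (Fin 2) ℚ :=
  A ^ 6 * q ^ 4 * (A ^ 2 * q ^ 4 + 1) *
    (A ^ 4 * q ^ 16 + A ^ 2 * q ^ 10 + A ^ 2 * q ^ 8 - q ^ 6 + q ^ 2 + 1)

/-- `F₂* := A⁶q⁴·(A⁴q¹⁶ + A²q¹⁰ + A²q⁸ + 1)`. -/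
noncomputable def F₂star : MvPolynomial (Fin 2) ℚ :=
  A ^ 6 * q ^ 4 * (A ^ 4 * q ^ 16 + A ^ 2 * q ^ 10 + A ^ 2 * q ^ 8 + 1)

/-- The substitution `A ↦ A·q²`, `q ↦ q` on `ℚ[A,q]`. -/
noncomputable def shiftA : MvPolynomial (Fin 2) ℚ →ₐ[ℚ] MvPolynomial (Fin 2) ℚ :=
  aeval ![A * q ^ 2, q]

@[simp]
theorem shiftA_A : shiftA A = A * q ^ 2 := by
  simp [shiftA, A]

@[simp]
theorem shiftA_q : shiftA q = q := by
  simp [shiftA, q]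

theorem q_pow_four_mul_F₂star : q ^ 4 * F₂star = A ^ 2 * shiftA F₂ := by
  simp only [F₂, F₂star, map_add, map_mul, map_pow, map_one, shiftA_A, shiftA_q]
  ring

theorem F₃_eq : F₃ = (1 + A ^ 2 * q ^ 4) * (F₂star - A ^ 6 * q ^ 6 * (q ^ 4 - 1)) := by
  unfold F₃ F₂star
  ring

theorem one_add_A_sq_mul_q_pow_four_ne_zero : (1 + A ^ 2 * q ^ 4 : MvPolynomial (Fin 2) ℚ) ≠ 0 :=
  fun h => by simpa [A, q] using congrArg constantCoeff h

/-- `q⁴·F₂* = A²·F₂` with `A` replaced by `Aq²`; `F₃ = (1 + A²q⁴)·(F₂* − A⁶q⁶·(q⁴−1))`;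
in particular `(1 + A²q⁴)` divides `F₃`, and `q²(q⁴−1)` divides
`F₃/(1 + A²q⁴) − F₂*`. -/
theorem F3_factorization :
    q ^ 4 * F₂star = A ^ 2 * shiftA F₂ ∧
    F₃ = (1 + A ^ 2 * q ^ 4) * (F₂star - A ^ 6 * q ^ 6 * (q ^ 4 - 1)) ∧
    (1 + A ^ 2 * q ^ 4) ∣ F₃ ∧
    ∀ E : MvPolynomial (Fin 2) ℚ, F₃ = (1 + A ^ 2 * q ^ 4) * E →
      q ^ 2 * (q ^ 4 - 1) ∣ E - F₂star := by
  refine ⟨q_pow_four_mul_F₂star, F₃_eq, ⟨_, F₃_eq⟩, fun E hE => ?_⟩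
  have hE_eq : E = F₂star - A ^ 6 * q ^ 6 * (q ^ 4 - 1) :=
    mul_left_cancel₀ one_add_A_sq_mul_q_pow_four_ne_zero (hE.symm.trans F₃_eq)
  exact ⟨-(A ^ 6 * q ^ 4), by rw [hE_eq]; ring⟩

end Stmt10
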